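/- arXiv:1709.05509 — 6 statements merged into one kernel-verified Lean document; each statement's English description precedes it below -/
import Mathlib

section
/- Let c_0,...,c_k, d_0,...,d_k ∈ (0,2π), C_j = e^{i c_j}, D_j = e^{i d_j}, p ∈ {0,1}. Assume (1/2)·Σ_{j=0}^k (c_j + d_j) ≡ pπ (mod 2π), Π_{j=0}^k sin(c_j/2) = Π_{j=0}^k sin(d_j/2), and that the denominators below are nonzero. Then C_0 = ((−1)^p + Π_{j=1}^k(1 − D_j^{-1}) / Π_{j=1}^k(C_j − 1)) / ((−1)^p + Π_{j=1}^k(D_j − 1) / Π_{j=1}^k(1 − C_j^{-1})). -/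
/-!
Since `C - 1 = e^{ic/2} · 2i sin(c/2)` and `C = (e^{ic/2})²`, the equality of the sine products
and the angle-sum condition `e^{i Σ (c_j + d_j) / 2} = (-1)^p` give the closure relation
`∏ (1 - C_j⁻¹) = (-1)^p ∏ (D_j - 1)` together with `∏ C_j D_j = 1`. After splitting off the index
`0`, the second relation eliminates `D_0` from the first, which then becomes linear in `C_0`.
-/

open Finset

namespace Complex

theorem exp_I_mul_sub_one (x : ℂ) :
    exp (I * x) - 1 = exp (I * (x / 2)) * (2 * I * sin (x / 2)) := by
  rw [sin, show -(x / 2) * I = -(I * (x / 2)) by ring, mul_comm (x / 2), exp_neg,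
    show I * x = I * (x / 2) + I * (x / 2) by ring, exp_add]
  have hw : exp (I * (x / 2)) ≠ 0 := exp_ne_zero _
  generalize exp (I * (x / 2)) = w at hw ⊢
  field_simp
  linear_combination (w ^ 2 - 1) * I_mul_I

theorem prod_exp_I_mul_sub_one {ι : Type*} (s : Finset ι) (c : ι → ℂ) :
    ∏ j ∈ s, (exp (I * c j) - 1)
      = exp (I * ((∑ j ∈ s, c j) / 2)) * ∏ j ∈ s, (2 * I * sin (c j / 2)) := by
  simp_rw [exp_I_mul_sub_one, prod_mul_distrib, ← exp_sum, sum_div, mul_sum]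

theorem exp_I_mul_eq_neg_one_pow {θ : ℝ} {p : ℕ} {m : ℤ}
    (h : θ = p * Real.pi + m * (2 * Real.pi)) : exp (I * θ) = (-1) ^ p := by
  rw [h]
  push_cast
  rw [show I * (p * Real.pi + m * (2 * Real.pi)) = p * (Real.pi * I) + m * (2 * Real.pi * I) by
      ring,
    exp_add, exp_int_mul_two_pi_mul_I, mul_one, exp_nat_mul, exp_pi_mul_I]

end Complex

theorem Finset.prod_mul_prod_one_sub_inv {ι K : Type*} [Field K] (s : Finset ι) {f : ι → K}
    (hf : ∀ j ∈ s, f j ≠ 0) : (∏ j ∈ s, f j) * ∏ j ∈ s, (1 - (f j)⁻¹) = ∏ j ∈ s, (f j - 1) := by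
  rw [← prod_mul_distrib]
  refine prod_congr rfl fun j hj => ?_
  field_simp [hf j hj]

namespace Complex

variable {ι : Type*} {s : Finset ι} {c d : ι → ℂ} {p : ℕ}

theorem prod_exp_I_mul_mul_exp_I_mul
    (hsum : exp (I * ((∑ j ∈ s, (c j + d j)) / 2)) = (-1) ^ p) :
    ∏ j ∈ s, (exp (I * c j) * exp (I * d j)) = 1 := by
  simp_rw [← exp_add, ← mul_add, ← exp_sum, ← mul_sum]
  rw [show I * ∑ j ∈ s, (c j + d j)
      = I * ((∑ j ∈ s, (c j + d j)) / 2) + I * ((∑ j ∈ s, (c j + d j)) / 2) by ring,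
    exp_add, hsum, ← mul_pow]
  norm_num

theorem prod_one_sub_inv_exp_I_mul
    (hsum : exp (I * ((∑ j ∈ s, (c j + d j)) / 2)) = (-1) ^ p)
    (hsin : ∏ j ∈ s, sin (c j / 2) = ∏ j ∈ s, sin (d j / 2)) :
    ∏ j ∈ s, (1 - (exp (I * c j))⁻¹) = (-1) ^ p * ∏ j ∈ s, (exp (I * d j) - 1) := by
  have hC := s.prod_mul_prod_one_sub_inv fun j _ => exp_ne_zero (I * c j)
  have hT : ∏ j ∈ s, (2 * I * sin (c j / 2)) = ∏ j ∈ s, (2 * I * sin (d j / 2)) := by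
    rw [prod_mul_distrib, hsin, ← prod_mul_distrib]
  rw [prod_exp_I_mul_sub_one, ← exp_sum, ← mul_sum, hT,
    show I * ∑ j ∈ s, c j = I * ((∑ j ∈ s, c j) / 2) + I * ((∑ j ∈ s, c j) / 2) by ring,
    exp_add] at hC
  rw [sum_add_distrib, add_div, mul_add, exp_add] at hsum
  have hsq : ((-1 : ℂ) ^ p) * (-1) ^ p = 1 := by rw [← mul_pow]; norm_num
  rw [prod_exp_I_mul_sub_one]
  set u := exp (I * ((∑ j ∈ s, c j) / 2))
  set v := exp (I * ((∑ j ∈ s, d j) / 2))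
  set L := ∏ j ∈ s, (1 - (exp (I * c j))⁻¹)
  set T := ∏ j ∈ s, (2 * I * sin (d j / 2))
  -- `u * u * L = u * T` and `u * v = (-1) ^ p` squares to `1`, so `L = u⁻¹ * T = (-1) ^ p * v * T`.
  linear_combination v ^ 2 * hC + (v * T - L * (u * v + (-1) ^ p)) * hsum - L * hsq

end Complex

/-- Solving the closure relation for `A`: here `Y = γ⁻¹ X` and `R = δ⁻¹ Q` play the roles of
`∏ (1 - C_j⁻¹)` and `∏ (1 - D_j⁻¹)`, and `A * B * (γ * δ) = 1` eliminates `B`. -/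
theorem eq_div_of_closure {K : Type*} [Field K] {E A B γ δ X Y Q R : K} (hE : E * E = 1)
    (hX : X ≠ 0) (hY : γ * Y = X) (hR : δ * R = Q) (hangle : A * B * (γ * δ) = 1)
    (hclosure : (1 - A⁻¹) * Y = E * ((B - 1) * Q)) (hden : E + Q / Y ≠ 0) :
    A = (E + R / X) / (E + Q / Y) := by
  subst hY hR
  obtain ⟨hγ, hY⟩ := mul_ne_zero_iff.mp hX
  have hA : A ≠ 0 := left_ne_zero_of_mul (left_ne_zero_of_mul_eq_one hangle)
  rw [eq_div_iff hden]
  field_simp at hclosure ⊢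
  linear_combination E * γ * hclosure + R * hangle + A * γ * δ * (B - 1) * R * hE

open Real

theorem stmt1_general (k : ℕ) (c d : ℕ → ℝ) (p : ℕ)
    (hsum : ∃ m : ℤ, (1/2) * (∑ j ∈ Finset.range (k+1), (c j + d j)) = p * π + m * (2*π))
    (hprod : ∏ j ∈ Finset.range (k+1), Real.sin (c j / 2)
      = ∏ j ∈ Finset.range (k+1), Real.sin (d j / 2))
    (hC1 : ∏ j ∈ Finset.Icc 1 k, (Complex.exp (Complex.I * (c j)) - 1) ≠ 0)
    (hden : (-1)^p + (∏ j ∈ Finset.Icc 1 k, (Complex.exp (Complex.I * (d j)) - 1))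
        / (∏ j ∈ Finset.Icc 1 k, (1 - (Complex.exp (Complex.I * (c j)))⁻¹)) ≠ 0) :
    Complex.exp (Complex.I * (c 0))
      = ((-1)^p + (∏ j ∈ Finset.Icc 1 k, (1 - (Complex.exp (Complex.I * (d j)))⁻¹))
            / (∏ j ∈ Finset.Icc 1 k, (Complex.exp (Complex.I * (c j)) - 1)))
        / ((-1)^p + (∏ j ∈ Finset.Icc 1 k, (Complex.exp (Complex.I * (d j)) - 1))
            / (∏ j ∈ Finset.Icc 1 k, (1 - (Complex.exp (Complex.I * (c j)))⁻¹))) := by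
  obtain ⟨m, hm⟩ := hsum
  have hhalf : Complex.exp (Complex.I * ((∑ j ∈ range (k + 1), ((c j : ℂ) + d j)) / 2))
      = (-1) ^ p := by
    rw [← Complex.exp_I_mul_eq_neg_one_pow hm]
    push_cast
    ring_nf
  have hsin : ∏ j ∈ range (k + 1), Complex.sin ((c j : ℂ) / 2)
      = ∏ j ∈ range (k + 1), Complex.sin ((d j : ℂ) / 2) := by
    exact_mod_cast congrArg Complex.ofReal hprod
  have hclosure := Complex.prod_one_sub_inv_exp_I_mul hhalf hsin
  have hangle := Complex.prod_exp_I_mul_mul_exp_I_mul hhalf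
  have hsplit : range (k + 1) = insert 0 (Icc 1 k) := by
    ext j; simp only [mem_range, mem_insert, mem_Icc]; omega
  have h0 : 0 ∉ Icc 1 k := by simp
  rw [hsplit, prod_insert h0, prod_insert h0] at hclosure
  rw [hsplit, prod_insert h0, prod_mul_distrib] at hangle
  exact eq_div_of_closure (by rw [← mul_pow]; norm_num) hC1
    ((Icc 1 k).prod_mul_prod_one_sub_inv fun j _ => Complex.exp_ne_zero _)
    ((Icc 1 k).prod_mul_prod_one_sub_inv fun j _ => Complex.exp_ne_zero _) hangle hclosure hden

theorem stmt1 (k : ℕ) (c d : ℕ → ℝ) (p : ℕ)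
    (hp : p = 0 ∨ p = 1)
    (hc : ∀ j ≤ k, c j ∈ Set.Ioo 0 (2*π)) (hd : ∀ j ≤ k, d j ∈ Set.Ioo 0 (2*π))
    (hsum : ∃ m : ℤ, (1/2) * (∑ j ∈ Finset.range (k+1), (c j + d j)) = p * π + m * (2*π))
    (hprod : ∏ j ∈ Finset.range (k+1), Real.sin (c j / 2)
      = ∏ j ∈ Finset.range (k+1), Real.sin (d j / 2))
    (hC1 : ∏ j ∈ Finset.Icc 1 k, (Complex.exp (Complex.I * (c j)) - 1) ≠ 0)
    (hC2 : ∏ j ∈ Finset.Icc 1 k, (1 - (Complex.exp (Complex.I * (c j)))⁻¹) ≠ 0)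
    (hden : (-1)^p + (∏ j ∈ Finset.Icc 1 k, (Complex.exp (Complex.I * (d j)) - 1))
        / (∏ j ∈ Finset.Icc 1 k, (1 - (Complex.exp (Complex.I * (c j)))⁻¹)) ≠ 0) :
    Complex.exp (Complex.I * (c 0))
      = ((-1)^p + (∏ j ∈ Finset.Icc 1 k, (1 - (Complex.exp (Complex.I * (d j)))⁻¹))
            / (∏ j ∈ Finset.Icc 1 k, (Complex.exp (Complex.I * (c j)) - 1)))
        / ((-1)^p + (∏ j ∈ Finset.Icc 1 k, (Complex.exp (Complex.I * (d j)) - 1))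
            / (∏ j ∈ Finset.Icc 1 k, (1 - (Complex.exp (Complex.I * (c j)))⁻¹))) :=
  stmt1_general k c d p hsum hprod hC1 hden
end

section
/- Let four circles C_1, C_2, C_3, C_4 in the Euclidean plane be such that consecutive circles C_i and C_{i+1} (indices mod 4) intersect in two points A_{i,i+1} and B_{i,i+1}, all eight points being distinct. Let θ_{i,i+1} denote the exterior intersection angle ∠O_i A_{i,i+1} O_{i+1} between consecutive circles, where O_i is the center of C_i. Then θ_{1,2} + θ_{3,4} ≡ θ_{2,3} + θ_{4,1} (mod 2π) if and only if the four points A_{1,2}, A_{2,3}, A_{3,4}, A_{4,1} are concyclic. -/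
open EuclideanGeometry

theorem stmt2 {V P : Type*} [NormedAddCommGroup V] [InnerProductSpace ℝ V]
    [MetricSpace P] [NormedAddTorsor V P] [Fact (Module.finrank ℝ V = 2)]
    [Module.Oriented ℝ V (Fin 2)]
    (O A B : Fin 4 → P) (r : Fin 4 → ℝ) (hr : ∀ i, 0 < r i)
    (hA1 : ∀ i, dist (A i) (O i) = r i) (hA2 : ∀ i, dist (A i) (O (i+1)) = r (i+1))
    (hB1 : ∀ i, dist (B i) (O i) = r i) (hB2 : ∀ i, dist (B i) (O (i+1)) = r (i+1))
    (hAB : ∀ i, A i ≠ B i)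
    (hinjA : Function.Injective A) (hinjB : Function.Injective B)
    (hABall : ∀ i j, A i ≠ B j)
    (hncol : ¬ Collinear ℝ (Set.range A)) :
    (EuclideanGeometry.oangle (O 0) (A 0) (O 1) + EuclideanGeometry.oangle (O 2) (A 2) (O 3)
      = EuclideanGeometry.oangle (O 1) (A 1) (O 2) + EuclideanGeometry.oangle (O 3) (A 3) (O 0))
      ↔ EuclideanGeometry.Concyclic (Set.range A) := by
  -- distances in convenient form
  have hA20 : dist (A 0) (O 1) = r 1 := hA2 0
  have hA21 : dist (A 1) (O 2) = r 2 := hA2 1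
  have hA22 : dist (A 2) (O 3) = r 3 := hA2 2
  have hA23 : dist (A 3) (O 0) = r 0 := hA2 3
  -- points are distinct from the centers
  have hOA : ∀ (i : Fin 4) (p : P), dist p (O i) = r i → O i ≠ p := by
    intro i p h he
    rw [← he, dist_self] at h
    exact (hr i).ne h
  have hO0A0 : O 0 ≠ A 0 := hOA 0 _ (hA1 0)
  have hO1A1 : O 1 ≠ A 1 := hOA 1 _ (hA1 1)
  have hO2A2 : O 2 ≠ A 2 := hOA 2 _ (hA1 2)
  have hO3A3 : O 3 ≠ A 3 := hOA 3 _ (hA1 3)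
  have hO1A0 : O 1 ≠ A 0 := hOA 1 _ hA20
  have hO2A1 : O 2 ≠ A 1 := hOA 2 _ hA21
  have hO3A2 : O 3 ≠ A 2 := hOA 3 _ hA22
  have hO0A3 : O 0 ≠ A 3 := hOA 0 _ hA23
  -- pairwise distinctness of the A i
  have ha01 : A 0 ≠ A 1 := hinjA.ne (by decide)
  have ha02 : A 0 ≠ A 2 := hinjA.ne (by decide)
  have ha03 : A 0 ≠ A 3 := hinjA.ne (by decide)
  have ha12 : A 1 ≠ A 2 := hinjA.ne (by decide)
  have ha13 : A 1 ≠ A 3 := hinjA.ne (by decide)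
  have ha23 : A 2 ≠ A 3 := hinjA.ne (by decide)
  -- abbreviations
  set x0 : Real.Angle := ∡ (O 0) (A 0) (A 3) with hx0
  set x1 : Real.Angle := ∡ (O 1) (A 1) (A 0) with hx1
  set x2 : Real.Angle := ∡ (O 2) (A 2) (A 1) with hx2
  set x3 : Real.Angle := ∡ (O 3) (A 3) (A 2) with hx3
  set φ0 : Real.Angle := ∡ (A 3) (A 0) (A 1) with hφ0
  set φ1 : Real.Angle := ∡ (A 0) (A 1) (A 2) with hφ1
  set φ2 : Real.Angle := ∡ (A 1) (A 2) (A 3) with hφ2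
  set φ3 : Real.Angle := ∡ (A 2) (A 3) (A 0) with hφ3
  -- isosceles (pons asinorum) facts, transferring base angles to the other vertex
  have hiso1 : ∡ (O 1) (A 1) (A 0) = ∡ (A 1) (A 0) (O 1) :=
    oangle_eq_oangle_of_dist_eq (by rw [dist_comm (O 1) (A 1), hA1 1, dist_comm (O 1) (A 0), hA20])
  have hiso2 : ∡ (O 2) (A 2) (A 1) = ∡ (A 2) (A 1) (O 2) :=
    oangle_eq_oangle_of_dist_eq (by rw [dist_comm (O 2) (A 2), hA1 2, dist_comm (O 2) (A 1), hA21])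
  have hiso3 : ∡ (O 3) (A 3) (A 2) = ∡ (A 3) (A 2) (O 3) :=
    oangle_eq_oangle_of_dist_eq (by rw [dist_comm (O 3) (A 3), hA1 3, dist_comm (O 3) (A 2), hA22])
  have hiso0 : ∡ (O 0) (A 0) (A 3) = ∡ (A 0) (A 3) (O 0) :=
    oangle_eq_oangle_of_dist_eq (by rw [dist_comm (O 0) (A 0), hA1 0, dist_comm (O 0) (A 3), hA23])
  -- decomposition of each intersection angle
  have hθ0 : ∡ (O 0) (A 0) (O 1) = x0 + φ0 + x1 := by
    rw [hx0, hφ0, hx1, hiso1, ← oangle_add hO0A0 ha03.symm hO1A0,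
        ← oangle_add ha03.symm ha01.symm hO1A0, add_assoc]
  have hθ1 : ∡ (O 1) (A 1) (O 2) = x1 + φ1 + x2 := by
    rw [hx1, hφ1, hx2, hiso2, ← oangle_add hO1A1 ha01 hO2A1,
        ← oangle_add ha01 ha12.symm hO2A1, add_assoc]
  have hθ2 : ∡ (O 2) (A 2) (O 3) = x2 + φ2 + x3 := by
    rw [hx2, hφ2, hx3, hiso3, ← oangle_add hO2A2 ha12 hO3A2,
        ← oangle_add ha12 ha23.symm hO3A2, add_assoc]
  have hθ3 : ∡ (O 3) (A 3) (O 0) = x3 + φ3 + x0 := by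
    rw [hx3, hφ3, hx0, hiso0, ← oangle_add hO3A3 ha23 hO0A3,
        ← oangle_add ha23 ha03 hO0A3, add_assoc]
  -- the sum of the angles of the quadrilateral is zero
  have hd0 : ∡ (A 3) (A 0) (A 2) + ∡ (A 2) (A 0) (A 1) = φ0 :=
    oangle_add ha03.symm ha02.symm ha01.symm
  have hd2 : ∡ (A 1) (A 2) (A 0) + ∡ (A 0) (A 2) (A 3) = φ2 :=
    oangle_add ha12 ha02 ha23.symm
  have ht1 : ∡ (A 0) (A 1) (A 2) + ∡ (A 1) (A 2) (A 0) + ∡ (A 2) (A 0) (A 1) = (Real.pi : Real.Angle) :=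
    oangle_add_oangle_add_oangle_eq_pi ha01.symm ha12.symm ha02
  have ht2 : ∡ (A 2) (A 3) (A 0) + ∡ (A 3) (A 0) (A 2) + ∡ (A 0) (A 2) (A 3) = (Real.pi : Real.Angle) :=
    oangle_add_oangle_add_oangle_eq_pi ha23.symm ha03 ha02.symm
  have hsum : φ0 + φ1 + φ2 + φ3 = 0 := by
    calc φ0 + φ1 + φ2 + φ3
        = (∡ (A 0) (A 1) (A 2) + ∡ (A 1) (A 2) (A 0) + ∡ (A 2) (A 0) (A 1))
          + (∡ (A 2) (A 3) (A 0) + ∡ (A 3) (A 0) (A 2) + ∡ (A 0) (A 2) (A 3)) := by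
          rw [← hd0, ← hd2, hφ1, hφ3]; abel
      _ = (Real.pi : Real.Angle) + (Real.pi : Real.Angle) := by rw [ht1, ht2]
      _ = 0 := Real.Angle.coe_pi_add_coe_pi
  have h13 : φ1 + φ3 = -(φ0 + φ2) := by
    have h : (φ1 + φ3) + (φ0 + φ2) = 0 := by rw [← hsum]; abel
    exact eq_neg_of_add_eq_zero_left h
  -- reduce the angle condition to twice-angle equality
  have key : (∡ (O 0) (A 0) (O 1) + ∡ (O 2) (A 2) (O 3)
      = ∡ (O 1) (A 1) (O 2) + ∡ (O 3) (A 3) (O 0))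
      ↔ (2 : ℤ) • ∡ (A 3) (A 0) (A 1) = (2 : ℤ) • ∡ (A 3) (A 2) (A 1) := by
    rw [hθ0, hθ1, hθ2, hθ3, oangle_rev (A 1) (A 2) (A 3), ← hφ0, ← hφ2,
      show x0 + φ0 + x1 + (x2 + φ2 + x3) = (φ0 + φ2) + (x0 + x1 + x2 + x3) by abel,
      show x1 + φ1 + x2 + (x3 + φ3 + x0) = (φ1 + φ3) + (x0 + x1 + x2 + x3) by abel,
      add_left_inj, h13, smul_neg, eq_neg_iff_add_eq_zero, eq_neg_iff_add_eq_zero,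
      ← smul_add, two_zsmul]
  rw [key]
  -- identify the range of A
  have hrange : Set.range A = ({A 3, A 0, A 2, A 1} : Set P) := by
    ext x
    constructor
    · rintro ⟨i, rfl⟩
      fin_cases i <;> simp
    · rintro (rfl | rfl | rfl | rfl)
      exacts [⟨3, rfl⟩, ⟨0, rfl⟩, ⟨2, rfl⟩, ⟨1, rfl⟩]
  constructor
  · intro h
    rcases concyclic_or_collinear_of_two_zsmul_oangle_eq h with hc | hc
    · rw [hrange]; exact hc
    · exact absurd (hrange ▸ hc) hncol
  · intro h
    rw [hrange] at h
    exact h.1.two_zsmul_oangle_eq ha03 ha01 ha23 ha12.symm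
end

section
/- Four circles C_1, C_2, C_3, C_4 in the plane pairwise intersect consecutively (indices mod 4) in points {A_{i,i+1}, B_{i,i+1}}. If the points A_{1,2}, A_{2,3}, A_{3,4}, A_{4,1} are concyclic, then the points B_{1,2}, B_{2,3}, B_{3,4}, B_{4,1} are concyclic (Miquel's six circles theorem). -/
open EuclideanGeometry

theorem stmt3 {V P : Type*} [NormedAddCommGroup V] [InnerProductSpace ℝ V]
    [MetricSpace P] [NormedAddTorsor V P] [Fact (Module.finrank ℝ V = 2)]
    (O A B : Fin 4 → P) (r : Fin 4 → ℝ) (hr : ∀ i, 0 < r i)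
    (hA1 : ∀ i, dist (A i) (O i) = r i) (hA2 : ∀ i, dist (A i) (O (i+1)) = r (i+1))
    (hB1 : ∀ i, dist (B i) (O i) = r i) (hB2 : ∀ i, dist (B i) (O (i+1)) = r (i+1))
    (hAB : ∀ i, A i ≠ B i)
    (hinjA : Function.Injective A) (hinjB : Function.Injective B)
    (hABall : ∀ i j, A i ≠ B j)
    (hncolB : ¬ Collinear ℝ (Set.range B))
    (hconA : EuclideanGeometry.Concyclic (Set.range A)) :
    EuclideanGeometry.Concyclic (Set.range B) := by
  haveI : FiniteDimensional ℝ V :=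
    FiniteDimensional.of_finrank_eq_succ (Fact.out : Module.finrank ℝ V = 2)
  haveI : Module.Oriented ℝ V (Fin 2) :=
    ⟨(Module.finBasisOfFinrankEq ℝ V (Fact.out : Module.finrank ℝ V = 2)).orientation⟩
  -- index arithmetic in `Fin 4`
  have e0 : (0 : Fin 4) + 1 = 1 := by decide
  have e1 : (1 : Fin 4) + 1 = 2 := by decide
  have e2 : (2 : Fin 4) + 1 = 3 := by decide
  have e3 : (3 : Fin 4) + 1 = 0 := by decide
  -- the four circles as spheres
  set s0 : Sphere P := ⟨O 0, r 0⟩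
  set s1 : Sphere P := ⟨O 1, r 1⟩
  set s2 : Sphere P := ⟨O 2, r 2⟩
  set s3 : Sphere P := ⟨O 3, r 3⟩
  have mA0s0 : A 0 ∈ s0 := mem_sphere.mpr (hA1 0)
  have mB0s0 : B 0 ∈ s0 := mem_sphere.mpr (hB1 0)
  have mA3s0 : A 3 ∈ s0 := mem_sphere.mpr (by have := hA2 3; rwa [e3] at this)
  have mB3s0 : B 3 ∈ s0 := mem_sphere.mpr (by have := hB2 3; rwa [e3] at this)
  have mA1s1 : A 1 ∈ s1 := mem_sphere.mpr (hA1 1)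
  have mB1s1 : B 1 ∈ s1 := mem_sphere.mpr (hB1 1)
  have mA0s1 : A 0 ∈ s1 := mem_sphere.mpr (by have := hA2 0; rwa [e0] at this)
  have mB0s1 : B 0 ∈ s1 := mem_sphere.mpr (by have := hB2 0; rwa [e0] at this)
  have mA2s2 : A 2 ∈ s2 := mem_sphere.mpr (hA1 2)
  have mB2s2 : B 2 ∈ s2 := mem_sphere.mpr (hB1 2)
  have mA1s2 : A 1 ∈ s2 := mem_sphere.mpr (by have := hA2 1; rwa [e1] at this)
  have mB1s2 : B 1 ∈ s2 := mem_sphere.mpr (by have := hB2 1; rwa [e1] at this)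
  have mA3s3 : A 3 ∈ s3 := mem_sphere.mpr (hA1 3)
  have mB3s3 : B 3 ∈ s3 := mem_sphere.mpr (hB1 3)
  have mA2s3 : A 2 ∈ s3 := mem_sphere.mpr (by have := hA2 2; rwa [e2] at this)
  have mB2s3 : B 2 ∈ s3 := mem_sphere.mpr (by have := hB2 2; rwa [e2] at this)
  -- the circle through the `A`s
  obtain ⟨c, rad, hc⟩ := hconA.1
  have mA : ∀ i, A i ∈ (⟨c, rad⟩ : Sphere P) := fun i =>
    mem_sphere.mpr (hc (A i) ⟨i, rfl⟩)
  -- distinctness facts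
  have hBA : ∀ i j, B i ≠ A j := fun i j h => hABall j i h.symm
  have nA01 : A 0 ≠ A 1 := hinjA.ne (by decide)
  have nA02 : A 0 ≠ A 2 := hinjA.ne (by decide)
  have nA03 : A 0 ≠ A 3 := hinjA.ne (by decide)
  have nA12 : A 1 ≠ A 2 := hinjA.ne (by decide)
  have nA13 : A 1 ≠ A 3 := hinjA.ne (by decide)
  have nA23 : A 2 ≠ A 3 := hinjA.ne (by decide)
  have nB01 : B 0 ≠ B 1 := hinjB.ne (by decide)
  have nB02 : B 0 ≠ B 2 := hinjB.ne (by decide)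
  have nB03 : B 0 ≠ B 3 := hinjB.ne (by decide)
  have nB12 : B 1 ≠ B 2 := hinjB.ne (by decide)
  have nB13 : B 1 ≠ B 3 := hinjB.ne (by decide)
  have nB23 : B 2 ≠ B 3 := hinjB.ne (by decide)
  -- inscribed angle theorem on the five known circles
  have h1 : (2 : ℤ) • ∡ (B 1) (B 0) (A 0) = (2 : ℤ) • ∡ (B 1) (A 1) (A 0) :=
    Sphere.two_zsmul_oangle_eq mB1s1 mB0s1 mA1s1 mA0s1 nB01 (hBA 0 0)
      (hABall 1 1) nA01.symm
  have h2 : (2 : ℤ) • ∡ (A 0) (B 0) (B 3) = (2 : ℤ) • ∡ (A 0) (A 3) (B 3) :=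
    Sphere.two_zsmul_oangle_eq mA0s0 mB0s0 mA3s0 mB3s0 (hBA 0 0) nB03
      nA03.symm (hABall 3 3)
  have h3 : (2 : ℤ) • ∡ (B 1) (B 2) (A 2) = (2 : ℤ) • ∡ (B 1) (A 1) (A 2) :=
    Sphere.two_zsmul_oangle_eq mB1s2 mB2s2 mA1s2 mA2s2 nB12.symm (hBA 2 2)
      (hABall 1 1) nA12
  have h4 : (2 : ℤ) • ∡ (A 2) (B 2) (B 3) = (2 : ℤ) • ∡ (A 2) (A 3) (B 3) :=
    Sphere.two_zsmul_oangle_eq mA2s3 mB2s3 mA3s3 mB3s3 (hBA 2 2) nB23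
      nA23.symm (hABall 3 3)
  have hA : (2 : ℤ) • ∡ (A 2) (A 1) (A 0) = (2 : ℤ) • ∡ (A 2) (A 3) (A 0) :=
    Sphere.two_zsmul_oangle_eq (mA 2) (mA 1) (mA 3) (mA 0) nA12 nA01.symm
      nA23.symm nA03.symm
  -- additivity of oriented angles
  have add0 : ∡ (B 1) (B 0) (A 0) + ∡ (A 0) (B 0) (B 3) = ∡ (B 1) (B 0) (B 3) :=
    oangle_add nB01.symm (hABall 0 0) nB03.symm
  have add2 : ∡ (B 1) (B 2) (A 2) + ∡ (A 2) (B 2) (B 3) = ∡ (B 1) (B 2) (B 3) :=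
    oangle_add nB12 (hABall 2 2) nB23.symm
  have add1 : ∡ (B 1) (A 1) (A 2) + ∡ (A 2) (A 1) (A 0) = ∡ (B 1) (A 1) (A 0) :=
    oangle_add (hABall 1 1).symm nA12.symm nA01
  have add3 : ∡ (A 0) (A 3) (A 2) + ∡ (A 2) (A 3) (B 3) = ∡ (A 0) (A 3) (B 3) :=
    oangle_add nA03 nA23 (hBA 3 3)
  -- the angle chase
  have key : (2 : ℤ) • ∡ (B 1) (B 0) (B 3) = (2 : ℤ) • ∡ (B 1) (B 2) (B 3) := by
    rw [← add0, ← add2, smul_add, smul_add, h1, h2, h3, h4, ← add1, ← add3,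
      smul_add, smul_add, hA, show ∡ (A 0) (A 3) (A 2) = -∡ (A 2) (A 3) (A 0) from
        oangle_rev (A 2) (A 3) (A 0), smul_neg]
    abel
  -- conclude
  have hrange : Set.range B = ({B 1, B 0, B 2, B 3} : Set P) := by
    ext x
    constructor
    · rintro ⟨i, rfl⟩
      fin_cases i <;> simp
    · rintro (rfl | rfl | rfl | rfl) <;> exact Set.mem_range_self _
  rcases cospherical_or_collinear_of_two_zsmul_oangle_eq key with h | h
  · exact ⟨by rwa [hrange], coplanar_of_fact_finrank_eq_two _⟩
  · exact absurd (by rwa [hrange]) hncolB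
end

section
/- Consider a 2×2 biperiodic circle pattern with vertices A, B, C, D, E, F, G, H, I (faces ABED, DEHG, BCFE, EFIH cyclic, with monodromies u = C − A = F − D = I − G and v = G − A = H − B = I − C). If ∠CBA ≡ 0 (mod π), i.e. B lies on line (AC), then all four faces are cyclic trapezoids and the fundamental domain ACIG is a rectangle, i.e. (A − C) ⟂ (A − G). -/
/-!
An angle chase in the circles `ABED` and `BCFE` (inscribed angles mod `π`, and the consecutive
angles of the parallelogram `ACFD`) carries the flatness at `B` over to `E`, so the edges `AB`,
`DE` and, by translation, `GH` are all parallel to `u`. Parallel chords of a circle share their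
perpendicular bisector, so the midpoints of `AB`, `DE`, `GH` lie on one line perpendicular to `u`;
since the midpoint of `GH` is that of `AB` translated by `v`, this gives `u ⟂ v`.
-/

open EuclideanGeometry

/-- A nondegenerate cyclic quadrilateral: four pairwise distinct concyclic points. -/
def NondegCyclicQuad {V P : Type*} [NormedAddCommGroup V] [InnerProductSpace ℝ V]
    [MetricSpace P] [NormedAddTorsor V P] (p q r s : P) : Prop :=
  p ≠ q ∧ p ≠ r ∧ p ≠ s ∧ q ≠ r ∧ q ≠ s ∧ r ≠ s ∧
    EuclideanGeometry.Concyclic ({p, q, r, s} : Set P)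

theorem collinear_zero_smul_smul {k V : Type*} [DivisionRing k] [AddCommGroup V] [Module k V]
    (w : V) (a b : k) : Collinear k ({0, a • w, b • w} : Set V) := by
  rw [collinear_iff_of_mem (Set.mem_insert 0 _)]
  refine ⟨w, ?_⟩
  rintro p (rfl | rfl | rfl)
  · exact ⟨0, by simp⟩
  · exact ⟨a, by simp⟩
  · exact ⟨b, by simp⟩

section InnerProductSpace

variable {V P : Type*} [NormedAddCommGroup V] [InnerProductSpace ℝ V]
  [MetricSpace P] [NormedAddTorsor V P]

theorem inner_center_vsub_midpoint_eq_zero {O p₁ p₂ : P} {w : V} {a : ℝ}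
    (hO : dist p₁ O = dist p₂ O) (hp : p₁ ≠ p₂) (ha : p₂ -ᵥ p₁ = a • w) :
    inner ℝ (O -ᵥ midpoint ℝ p₁ p₂) w = 0 := by
  have h := inner_vsub_vsub_of_dist_eq_of_dist_eq
    (dist_left_midpoint_eq_dist_right_midpoint (𝕜 := ℝ) p₁ p₂) hO
  rw [ha, real_inner_smul_right] at h
  refine (mul_eq_zero.mp h).resolve_left ?_
  rintro rfl
  rw [zero_smul, vsub_eq_zero_iff_eq] at ha
  exact hp ha.symm

/-- The perpendicular bisectors of two parallel chords of a sphere coincide. -/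
theorem EuclideanGeometry.Cospherical.inner_midpoint_vsub_midpoint_eq_zero {p₁ p₂ q₁ q₂ : P}
    {w : V} {a b : ℝ}
    (h : Cospherical ({p₁, p₂, q₂, q₁} : Set P)) (hp : p₁ ≠ p₂) (hq : q₁ ≠ q₂)
    (ha : p₂ -ᵥ p₁ = a • w) (hb : q₂ -ᵥ q₁ = b • w) :
    inner ℝ (midpoint ℝ q₁ q₂ -ᵥ midpoint ℝ p₁ p₂) w = 0 := by
  obtain ⟨O, r, hO⟩ := h
  have hp' := inner_center_vsub_midpoint_eq_zero
    ((hO p₁ (by simp)).trans (hO p₂ (by simp)).symm) hp ha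
  have hq' := inner_center_vsub_midpoint_eq_zero
    ((hO q₁ (by simp)).trans (hO q₂ (by simp)).symm) hq hb
  rw [← vsub_sub_vsub_cancel_left _ _ O, inner_sub_left, hp', hq', sub_zero]

end InnerProductSpace

section Oriented

variable {V P : Type*} [NormedAddCommGroup V] [InnerProductSpace ℝ V]
  [MetricSpace P] [NormedAddTorsor V P] [Fact (Module.finrank ℝ V = 2)]
  [Module.Oriented ℝ V (Fin 2)]

theorem collinear_of_two_zsmul_oangle_eq_zero {p₁ p₂ p₃ : P} (h : (2 : ℤ) • ∡ p₁ p₂ p₃ = 0) :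
    Collinear ℝ ({p₁, p₂, p₃} : Set P) :=
  oangle_eq_zero_or_eq_pi_iff_collinear.1 (Real.Angle.two_zsmul_eq_zero_iff.1 h)

theorem exists_vsub_eq_smul_vsub_of_two_zsmul_oangle_eq_zero {A B C : P}
    (h : (2 : ℤ) • ∡ C B A = 0) (hAC : A ≠ C) : ∃ t : ℝ, B -ᵥ A = t • (C -ᵥ A) := by
  have hB : B ∈ line[ℝ, A, C] :=
    (collinear_of_two_zsmul_oangle_eq_zero h).mem_affineSpan_of_mem_of_ne
      (by simp) (by simp) (by simp) hAC
  rw [← vsub_vadd B A, vadd_left_mem_affineSpan_pair] at hB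
  obtain ⟨t, ht⟩ := hB
  exact ⟨t, ht.symm⟩

theorem two_zsmul_oangle_add_two_zsmul_oangle_eq_zero_of_vsub_eq {A C D F : P}
    (h : F -ᵥ C = D -ᵥ A) : (2 : ℤ) • ∡ F C A + (2 : ℤ) • ∡ C A D = 0 := by
  rw [oangle, oangle, h, ← neg_vsub_eq_vsub_rev C A, Orientation.two_zsmul_oangle_neg_right,
    ← smul_add, Orientation.oangle_add_oangle_rev, smul_zero]

theorem NondegCyclicQuad.two_zsmul_oangle_eq_zero {A B C D E F : P}
    (h₁ : NondegCyclicQuad A B E D) (h₂ : NondegCyclicQuad B C F E)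
    (hFC : F -ᵥ C = D -ᵥ A) (hB : (2 : ℤ) • ∡ C B A = 0) :
    (2 : ℤ) • ∡ F E D = 0 := by
  obtain ⟨hAB, -, hAD, hBE, -, hED, hABED⟩ := h₁
  obtain ⟨hBC, -, -, hCF, -, hFE, hBCFE⟩ := h₂
  by_cases hAC : A = C
  · subst hAC
    rw [vsub_left_cancel hFC, oangle_self_left_right, smul_zero]
  have hcol : Collinear ℝ ({B, C, A} : Set P) :=
    Set.insert_comm C B {A} ▸ collinear_of_two_zsmul_oangle_eq_zero hB
  have hFECB : Cospherical ({F, E, C, B} : Set P) := by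
    convert hBCFE.1 using 1; ext; simp only [Set.mem_insert_iff, Set.mem_singleton_iff]; tauto
  have hBEAD : Cospherical ({B, E, A, D} : Set P) := by
    convert hABED.1 using 1; ext; simp only [Set.mem_insert_iff, Set.mem_singleton_iff]; tauto
  have hFEB : (2 : ℤ) • ∡ F E B = (2 : ℤ) • ∡ F C B :=
    hFECB.two_zsmul_oangle_eq hFE.symm hBE.symm hCF hBC.symm
  have hBED : (2 : ℤ) • ∡ B E D = (2 : ℤ) • ∡ B A D :=
    hBEAD.two_zsmul_oangle_eq hBE.symm hED hAB hAD
  calc (2 : ℤ) • ∡ F E D = (2 : ℤ) • ∡ F E B + (2 : ℤ) • ∡ B E D := by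
        rw [← smul_add, oangle_add hFE hBE hED.symm]
    _ = (2 : ℤ) • ∡ F C A + (2 : ℤ) • ∡ C A D := by
        rw [hFEB, hBED,
          hcol.two_zsmul_oangle_eq_right hBC hAC,
          (Set.pair_comm C A ▸ hcol :).two_zsmul_oangle_eq_left hAB.symm (Ne.symm hAC)]
    _ = 0 := two_zsmul_oangle_add_two_zsmul_oangle_eq_zero_of_vsub_eq hFC

end Oriented

theorem stmt9_general {V P : Type*} [NormedAddCommGroup V] [InnerProductSpace ℝ V]
    [MetricSpace P] [NormedAddTorsor V P] [Fact (Module.finrank ℝ V = 2)]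
    [Module.Oriented ℝ V (Fin 2)]
    (A B C D E F G H I : P) (u v : V) (hu : u ≠ 0)
    (f1 : NondegCyclicQuad A B E D) (f2 : NondegCyclicQuad D E H G)
    (f3 : NondegCyclicQuad B C F E)
    (hC : C = u +ᵥ A) (hF : F = u +ᵥ D)
    (hG : G = v +ᵥ A) (hH : H = v +ᵥ B) (hI' : I = v +ᵥ C)
    (hflat : (2 : ℤ) • EuclideanGeometry.oangle C B A = 0) :
    Collinear ℝ ({0, B -ᵥ A, E -ᵥ D} : Set V) ∧
    Collinear ℝ ({0, E -ᵥ D, H -ᵥ G} : Set V) ∧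
    Collinear ℝ ({0, C -ᵥ B, F -ᵥ E} : Set V) ∧
    Collinear ℝ ({0, F -ᵥ E, I -ᵥ H} : Set V) ∧
    (inner ℝ (A -ᵥ C) (A -ᵥ G) : ℝ) = 0 := by
  have hCA : C -ᵥ A = u := by rw [hC, vadd_vsub]
  have hFD : F -ᵥ D = u := by rw [hF, vadd_vsub]
  have hflatE := f1.two_zsmul_oangle_eq_zero f3
    (by rw [hC, hF, vadd_vsub_vadd_cancel_left]) hflat
  obtain ⟨t, hBA⟩ := exists_vsub_eq_smul_vsub_of_two_zsmul_oangle_eq_zero hflat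
    fun h ↦ hu (by rw [← hCA, h, vsub_self])
  obtain ⟨s, hED⟩ := exists_vsub_eq_smul_vsub_of_two_zsmul_oangle_eq_zero hflatE
    fun h ↦ hu (by rw [← hFD, h, vsub_self])
  rw [hCA] at hBA
  rw [hFD] at hED
  have hHG : H -ᵥ G = t • u := by rw [hH, hG, vadd_vsub_vadd_cancel_left, hBA]
  have hCB : C -ᵥ B = (1 - t) • u := by
    rw [← vsub_sub_vsub_cancel_right C B A, hCA, hBA, sub_smul, one_smul]
  have hFE : F -ᵥ E = (1 - s) • u := by
    rw [← vsub_sub_vsub_cancel_right F E D, hFD, hED, sub_smul, one_smul]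
  have hIH : I -ᵥ H = (1 - t) • u := by rw [hI', hH, vadd_vsub_vadd_cancel_left, hCB]
  refine ⟨hBA ▸ hED ▸ collinear_zero_smul_smul u t s, hED ▸ hHG ▸ collinear_zero_smul_smul u s t,
    hCB ▸ hFE ▸ collinear_zero_smul_smul u _ _, hFE ▸ hIH ▸ collinear_zero_smul_smul u _ _, ?_⟩
  obtain ⟨hAB, -, -, -, -, -, hABED⟩ := f1
  obtain ⟨hDE, -, -, -, -, hHG_ne, hDEHG⟩ := f2
  have hv : midpoint ℝ G H -ᵥ midpoint ℝ A B = v := by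
    rw [hG, hH, ← midpoint_vadd_midpoint, midpoint_self, vadd_vsub]
  have h₁ := hABED.1.inner_midpoint_vsub_midpoint_eq_zero hAB hDE hBA hED
  have h₂ := hDEHG.1.inner_midpoint_vsub_midpoint_eq_zero hDE hHG_ne.symm hED hHG
  rw [← neg_vsub_eq_vsub_rev C A, ← neg_vsub_eq_vsub_rev G A, inner_neg_neg, hCA, hG, vadd_vsub,
    real_inner_comm, ← hv, ← vsub_add_vsub_cancel _ (midpoint ℝ D E), inner_add_left, h₁, h₂,
    add_zero]

theorem stmt9 {V P : Type*} [NormedAddCommGroup V] [InnerProductSpace ℝ V]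
    [MetricSpace P] [NormedAddTorsor V P] [Fact (Module.finrank ℝ V = 2)]
    [Module.Oriented ℝ V (Fin 2)]
    (A B C D E F G H I : P) (u v : V) (hu : u ≠ 0) (hv : v ≠ 0)
    (f1 : NondegCyclicQuad A B E D) (f2 : NondegCyclicQuad D E H G)
    (f3 : NondegCyclicQuad B C F E) (f4 : NondegCyclicQuad E F I H)
    (hC : C = u +ᵥ A) (hF : F = u +ᵥ D) (hI : I = u +ᵥ G)
    (hG : G = v +ᵥ A) (hH : H = v +ᵥ B) (hI' : I = v +ᵥ C)
    (hflat : (2 : ℤ) • EuclideanGeometry.oangle C B A = 0) :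
    Collinear ℝ ({0, B -ᵥ A, E -ᵥ D} : Set V) ∧
    Collinear ℝ ({0, E -ᵥ D, H -ᵥ G} : Set V) ∧
    Collinear ℝ ({0, C -ᵥ B, F -ᵥ E} : Set V) ∧
    Collinear ℝ ({0, F -ᵥ E, I -ᵥ H} : Set V) ∧
    (inner ℝ (A -ᵥ C) (A -ᵥ G) : ℝ) = 0 :=
  stmt9_general A B C D E F G H I u v hu f1 f2 f3 hC hF hG hH hI' hflat
end

section
/- With a, b, c defined as above (in terms of x_I, y_I, x_D, x_E, y_E with y_I² ≠ y_E²), each of the five points (x_I, y_I), (−x_I, −y_I), (x_I, −y_I), (−x_I, y_I), and (x_E, y_E) lies on the quartic curve {(X,Y) ∈ ℝ² : (X²+Y²)² − aX² − bY² + c = 0}. -/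
noncomputable def quarticA (xI yI xD xE yE : ℝ) : ℝ :=
  xI^2 + yI^2 + xE^2 + yE^2 +
    (xD + xI)^2 * (xI^2 + yI^2 - xE^2 - yE^2) / (yI^2 - yE^2)

noncomputable def quarticB (xI yI xD xE yE : ℝ) : ℝ :=
  xI^2 + yI^2 + xE^2 + yE^2 +
    (xD + xI)^2 * (xE^2 - xI^2) * (xI^2 + yI^2 - xE^2 - yE^2) / (yI^2 - yE^2)^2

noncomputable def quarticC (xI yI xD xE yE : ℝ) : ℝ :=
  (xI^2 + yI^2) * (xE^2 + yE^2) +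
    (xD + xI)^2 * (xE^2 * yI^2 - xI^2 * yE^2) * (xI^2 + yI^2 - xE^2 - yE^2)
      / (yI^2 - yE^2)^2

/-- The quartic curve `K_S`. -/
def onQuartic (a b c X Y : ℝ) : Prop := (X^2 + Y^2)^2 - a * X^2 - b * Y^2 + c = 0

theorem stmt13 (xI yI xD xE yE : ℝ) (h : yI^2 ≠ yE^2) :
    onQuartic (quarticA xI yI xD xE yE) (quarticB xI yI xD xE yE)
        (quarticC xI yI xD xE yE) xI yI ∧
    onQuartic (quarticA xI yI xD xE yE) (quarticB xI yI xD xE yE)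
        (quarticC xI yI xD xE yE) (-xI) (-yI) ∧
    onQuartic (quarticA xI yI xD xE yE) (quarticB xI yI xD xE yE)
        (quarticC xI yI xD xE yE) xI (-yI) ∧
    onQuartic (quarticA xI yI xD xE yE) (quarticB xI yI xD xE yE)
        (quarticC xI yI xD xE yE) (-xI) yI ∧
    onQuartic (quarticA xI yI xD xE yE) (quarticB xI yI xD xE yE)
        (quarticC xI yI xD xE yE) xE yE := by
  have hd : yI^2 - yE^2 ≠ 0 := sub_ne_zero_of_ne h
  unfold onQuartic quarticA quarticB quarticC
  refine ⟨?_, ?_, ?_, ?_, ?_⟩ <;> field_simp <;> ring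
end

section
/- Let X_N, X_W, X_S, X_E be complex numbers of modulus 1 with X_N X_W X_S X_E = 1, and suppose Y_D = X_D for each D ∈ {N, W, S, E} (with all X_D ≠ 1). Then the Miquel mutation recurrence Y'_N = Y_N · [(1 − (1−X_W^{-1})(1−Y_N^{-1})/((1−Y_W)(1−X_N)))(1 − (1−X_E^{-1})(1−Y_N^{-1})/((1−Y_E)(1−X_N)))] / [(1 − (1−X_W)(1−Y_N)/((1−Y_W^{-1})(1−X_N^{-1})))(1 − (1−X_E)(1−Y_N)/((1−Y_E^{-1})(1−X_N^{-1})))] evaluates to Y'_N = X_S. -/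
/-!
Once `Y_D = X_D`, each factor of the recurrence collapses: the denominator factors become
`1 - X_W X_N` and `1 - X_E X_N`, the numerator factors `1 - (X_W X_N)⁻¹` and `1 - (X_E X_N)⁻¹`,
and `(1 - c⁻¹) / (1 - c) = -c⁻¹`. Hence `Y'_N = X_N (X_W X_N)⁻¹ (X_E X_N)⁻¹ = (X_N X_W X_E)⁻¹`,
which is `X_S` because `X_N X_W X_S X_E = 1`.
-/

section Field

variable {K : Type*} [Field K]

lemma one_sub_mul_one_sub_div_one_sub_inv_mul {a b : K} (ha₀ : a ≠ 0) (hb₀ : b ≠ 0)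
    (ha₁ : a ≠ 1) (hb₁ : b ≠ 1) :
    (1 - a) * (1 - b) / ((1 - a⁻¹) * (1 - b⁻¹)) = a * b := by
  have ha : 1 - a ≠ 0 := sub_ne_zero.mpr ha₁.symm
  have hb : 1 - b ≠ 0 := sub_ne_zero.mpr hb₁.symm
  field_simp
  ring

lemma one_sub_inv_mul_div_one_sub_mul {a b : K} (ha₀ : a ≠ 0) (hb₀ : b ≠ 0)
    (ha₁ : a ≠ 1) (hb₁ : b ≠ 1) :
    (1 - a⁻¹) * (1 - b⁻¹) / ((1 - a) * (1 - b)) = (a * b)⁻¹ := by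
  simpa only [inv_inv, mul_inv] using one_sub_mul_one_sub_div_one_sub_inv_mul (inv_ne_zero ha₀)
    (inv_ne_zero hb₀) (inv_ne_one.mpr ha₁) (inv_ne_one.mpr hb₁)

lemma one_sub_inv_div_one_sub {c : K} (hc₀ : c ≠ 0) (hc₁ : 1 - c ≠ 0) :
    (1 - c⁻¹) / (1 - c) = -c⁻¹ := by
  field_simp
  ring

end Field

theorem stmt18_general (XN XW XS XE YN YW YE : ℂ)
    (hprod : XN * XW * XS * XE = 1)
    (hN1 : XN ≠ 1) (hW1 : XW ≠ 1) (hE1 : XE ≠ 1)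
    (hYN : YN = XN) (hYW : YW = XW) (hYE : YE = XE)
    (hden1 : 1 - (1 - XW) * (1 - YN) / ((1 - YW⁻¹) * (1 - XN⁻¹)) ≠ 0)
    (hden2 : 1 - (1 - XE) * (1 - YN) / ((1 - YE⁻¹) * (1 - XN⁻¹)) ≠ 0) :
    YN * ((1 - (1 - XW⁻¹) * (1 - YN⁻¹) / ((1 - YW) * (1 - XN))) *
          (1 - (1 - XE⁻¹) * (1 - YN⁻¹) / ((1 - YE) * (1 - XN)))) /
        ((1 - (1 - XW) * (1 - YN) / ((1 - YW⁻¹) * (1 - XN⁻¹))) *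
          (1 - (1 - XE) * (1 - YN) / ((1 - YE⁻¹) * (1 - XN⁻¹))))
      = XS := by
  subst YN YW YE
  have hE0 : XE ≠ 0 := right_ne_zero_of_mul_eq_one hprod
  have hW0 : XW ≠ 0 := right_ne_zero_of_mul (left_ne_zero_of_mul (left_ne_zero_of_mul_eq_one hprod))
  have hN0 : XN ≠ 0 := left_ne_zero_of_mul (left_ne_zero_of_mul (left_ne_zero_of_mul_eq_one hprod))
  have denW := one_sub_mul_one_sub_div_one_sub_inv_mul hW0 hN0 hW1 hN1
  have denE := one_sub_mul_one_sub_div_one_sub_inv_mul hE0 hN0 hE1 hN1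
  rw [denW] at hden1
  rw [denE] at hden2
  rw [denW, denE, one_sub_inv_mul_div_one_sub_mul hW0 hN0 hW1 hN1,
    one_sub_inv_mul_div_one_sub_mul hE0 hN0 hE1 hN1, mul_div_assoc, mul_div_mul_comm,
    one_sub_inv_div_one_sub (mul_ne_zero hW0 hN0) hden1,
    one_sub_inv_div_one_sub (mul_ne_zero hE0 hN0) hden2]
  field_simp
  linear_combination -hprod

theorem stmt18 (XN XW XS XE YN YW YS YE : ℂ)
    (hNnorm : ‖XN‖ = 1) (hWnorm : ‖XW‖ = 1)
    (hSnorm : ‖XS‖ = 1) (hEnorm : ‖XE‖ = 1)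
    (hprod : XN * XW * XS * XE = 1)
    (hN1 : XN ≠ 1) (hW1 : XW ≠ 1) (hS1 : XS ≠ 1) (hE1 : XE ≠ 1)
    (hYN : YN = XN) (hYW : YW = XW) (hYS : YS = XS) (hYE : YE = XE)
    (hden1 : 1 - (1 - XW) * (1 - YN) / ((1 - YW⁻¹) * (1 - XN⁻¹)) ≠ 0)
    (hden2 : 1 - (1 - XE) * (1 - YN) / ((1 - YE⁻¹) * (1 - XN⁻¹)) ≠ 0) :
    YN * ((1 - (1 - XW⁻¹) * (1 - YN⁻¹) / ((1 - YW) * (1 - XN))) *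
          (1 - (1 - XE⁻¹) * (1 - YN⁻¹) / ((1 - YE) * (1 - XN)))) /
        ((1 - (1 - XW) * (1 - YN) / ((1 - YW⁻¹) * (1 - XN⁻¹))) *
          (1 - (1 - XE) * (1 - YN) / ((1 - YE⁻¹) * (1 - XN⁻¹))))
      = XS :=
  stmt18_general XN XW XS XE YN YW YE hprod hN1 hW1 hE1 hYN hYW hYE hden1 hden2
end
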